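/- arXiv:2508.09498 — 8 statements merged into one kernel-verified Lean document; each statement's English description precedes it below -/
import Mathlib

section
/- Let m ≥ 1 and let h be the restriction to the unit sphere S^m = {x ∈ ℝ^{m+1} : ‖x‖ = 1} (with its standard smooth manifold structure) of the first coordinate function x ↦ x_1. Then the manifold derivative (mfderiv) of h at a point x ∈ S^m is the zero linear map if and only if x = e_1 or x = -e_1, where e_1 denotes the first standard basis vector of ℝ^{m+1}. In particular, the natural height function of the unit sphere has exactly two singular points. -/
/-!
The height function is `⟪e₁, ·⟫` restricted to the sphere, so its derivative at `x` is `⟪e₁, ·⟫`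
on the tangent space `(ℝ ∙ x)ᗮ`. This vanishes iff `e₁ ∈ (ℝ ∙ x)ᗮᗮ = ℝ ∙ x`, and for two unit
vectors that means `x = ±e₁`.
-/

open Metric Module Manifold

section UnitVectors

variable {E : Type*} [NormedAddCommGroup E] [NormedSpace ℝ E]

theorem mem_span_singleton_iff_eq_or_eq_neg_of_norm_eq_one {u x : E} (hu : ‖u‖ = 1)
    (hx : ‖x‖ = 1) : u ∈ ℝ ∙ x ↔ x = u ∨ x = -u := by
  rw [Submodule.mem_span_singleton]
  constructor
  · rintro ⟨c, rfl⟩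
    have hc : |c| = 1 := by rwa [norm_smul, hx, mul_one, Real.norm_eq_abs] at hu
    rcases abs_eq zero_le_one |>.mp hc with rfl | rfl
    · exact .inl (one_smul ℝ x).symm
    · exact .inr (by rw [neg_one_smul, neg_neg])
  · rintro (h | h) <;> subst h
    · exact ⟨1, one_smul ℝ x⟩
    · exact ⟨-1, by rw [neg_one_smul, neg_neg]⟩

end UnitVectors

section Sphere

variable {E : Type*} [NormedAddCommGroup E] [InnerProductSpace ℝ E] {n : ℕ}
  [Fact (finrank ℝ E = n + 1)]

theorem mfderiv_continuousLinearMap_comp_coe_sphere {F : Type*} [NormedAddCommGroup F]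
    [NormedSpace ℝ F] (L : E →L[ℝ] F) (x : sphere (0 : E) 1) :
    mfderiv (𝓡 n) 𝓘(ℝ, F) (fun y : sphere (0 : E) 1 => L y) x =
      L.comp (mvfderiv (𝓡 n) ((↑) : sphere (0 : E) 1 → E) x) := by
  have hL : MDifferentiableAt 𝓘(ℝ, E) 𝓘(ℝ, F) L x :=
    L.contDiff.contMDiff.mdifferentiableAt one_ne_zero
  have hcoe : MDifferentiableAt (𝓡 n) 𝓘(ℝ, E) ((↑) : sphere (0 : E) 1 → E) x :=
    (contMDiff_coe_sphere x).mdifferentiableAt one_ne_zero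
  have hchain := mfderiv_comp x hL hcoe
  rwa [L.mfderiv_eq] at hchain

theorem mfderiv_inner_sphere_eq_zero_iff (v : E) (x : sphere (0 : E) 1) :
    mfderiv (𝓡 n) 𝓘(ℝ, ℝ) (fun y : sphere (0 : E) 1 => inner ℝ v (y : E)) x = 0 ↔
      v ∈ ℝ ∙ (x : E) := by
  set D := mvfderiv (𝓡 n) ((↑) : sphere (0 : E) 1 → E) x
  have hcomp : (innerSL ℝ v).comp D = 0 ↔ v ∈ D.rangeᗮ := by
    simp only [ContinuousLinearMap.ext_iff, Submodule.mem_orthogonal',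
      ContinuousLinearMap.comp_apply, innerSL_apply_apply, zero_apply]
    exact ⟨fun h _ ⟨w, hw⟩ => hw ▸ h w, fun h w => h _ ⟨w, rfl⟩⟩
  rw [← Submodule.orthogonal_orthogonal (ℝ ∙ (x : E)), ← range_mvfderiv_subtypeVal (n := n) x,
    ← hcomp]
  exact Eq.congr_left (mfderiv_continuousLinearMap_comp_coe_sphere (innerSL ℝ v) x)

end Sphere

theorem height_singular_points_iff_general (m : ℕ)
    [Fact (finrank ℝ (EuclideanSpace ℝ (Fin (m + 1))) = m + 1)]
    (x : sphere (0 : EuclideanSpace ℝ (Fin (m + 1))) 1) :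
    mfderiv (𝓡 m) 𝓘(ℝ, ℝ)
        (fun y : sphere (0 : EuclideanSpace ℝ (Fin (m + 1))) 1 =>
          (y : EuclideanSpace ℝ (Fin (m + 1))) 0) x = 0 ↔
      (x : EuclideanSpace ℝ (Fin (m + 1))) = EuclideanSpace.single 0 (1 : ℝ) ∨
      (x : EuclideanSpace ℝ (Fin (m + 1))) = -EuclideanSpace.single 0 (1 : ℝ) := by
  have height_eq_inner (y : EuclideanSpace ℝ (Fin (m + 1))) :
      y 0 = inner ℝ (EuclideanSpace.single 0 (1 : ℝ)) y := by
    simp [EuclideanSpace.inner_single_left]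
  refine ((funext fun y => height_eq_inner y) ▸ mfderiv_inner_sphere_eq_zero_iff _ x).trans ?_
  exact mem_span_singleton_iff_eq_or_eq_neg_of_norm_eq_one (by simp) (norm_eq_of_mem_sphere x)

/-- The natural height function (restriction of the first coordinate) on the unit
sphere `S^m ⊆ ℝ^{m+1}` has exactly two singular points: its manifold derivative at a
point `x` of the sphere vanishes if and only if `x = e₁` or `x = -e₁`. -/
theorem height_singular_points_iff (m : ℕ) (hm : 1 ≤ m)
    [Fact (finrank ℝ (EuclideanSpace ℝ (Fin (m + 1))) = m + 1)]
    (x : sphere (0 : EuclideanSpace ℝ (Fin (m + 1))) 1) :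
    mfderiv (𝓡 m) 𝓘(ℝ, ℝ)
        (fun y : sphere (0 : EuclideanSpace ℝ (Fin (m + 1))) 1 =>
          (y : EuclideanSpace ℝ (Fin (m + 1))) 0) x = 0 ↔
      (x : EuclideanSpace ℝ (Fin (m + 1))) = EuclideanSpace.single 0 (1 : ℝ) ∨
      (x : EuclideanSpace ℝ (Fin (m + 1))) = -EuclideanSpace.single 0 (1 : ℝ) :=
  height_singular_points_iff_general m x
end

section
/- Let m ≥ 2 and let S^m ⊂ ℝ^{m+1} be the unit sphere with height function h(x) = x_1. Define an equivalence relation on S^m by declaring x ~ y if and only if y belongs to the connected component containing x of the level set {z ∈ S^m : z_1 = x_1}. Then the map induced by h from the quotient topological space S^m/~ to the closed interval [-1, 1] is a homeomorphism. (In other words, the Reeb graph of the natural height function of the unit sphere of dimension at least 2 is homeomorphic to a closed interval.) -/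
/-!
Each level set `{x ∈ S^m | x₁ = c}`, `|c| ≤ 1`, is the image of the round sphere of radius
`√(1 - c²)` in the hyperplane `x₁ = 0`, which is connected because that hyperplane has dimension
`m ≥ 2`. So the Reeb relation of the height just says "same height", and the height descends to a
continuous bijection from the compact Reeb quotient onto the Hausdorff space `[-1, 1]`.
-/

open Metric Module Set Topology RealInnerProductSpace

def ReebRel {X Y : Type*} [TopologicalSpace X] (f : X → Y) (x y : X) : Prop :=
  y ∈ connectedComponentIn {z | f z = f x} x

theorem exists_homeomorph_quot_reebRel_range {X Y : Type*} [TopologicalSpace X] [CompactSpace X]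
    [TopologicalSpace Y] [T2Space Y] {f : X → Y} (hf : Continuous f)
    (hfib : ∀ x, IsPreconnected (f ⁻¹' {f x})) :
    ∃ φ : Quot (ReebRel f) ≃ₜ range f, ∀ x, (φ (Quot.mk _ x) : Y) = f x := by
  have hresp : ∀ x y, ReebRel f x y → rangeFactorization f x = rangeFactorization f y :=
    fun x y hxy => Subtype.ext (connectedComponentIn_subset _ _ hxy).symm
  have hinj : (Quot.lift _ hresp).Injective := by
    refine fun a b => Quot.induction_on₂ a b fun x y hxy => Quot.sound ?_
    exact (hfib x).subset_connectedComponentIn rfl subset_rfl (congrArg Subtype.val hxy).symm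
  have hsurj : (Quot.lift _ hresp).Surjective := fun y =>
    let ⟨x, hx⟩ := rangeFactorization_surjective y
    ⟨Quot.mk _ x, hx⟩
  have hcont : Continuous (Quot.lift _ hresp) := continuous_quot_lift hresp hf.rangeFactorization
  exact ⟨hcont.homeoOfEquivCompactToT2 (f := Equiv.ofBijective _ ⟨hinj, hsurj⟩), fun _ => rfl⟩

section SphereSlice

variable {E : Type*} [NormedAddCommGroup E] [InnerProductSpace ℝ E] {u : E}

theorem norm_smul_add_sq_of_inner_eq_zero (hu : ‖u‖ = 1) (c : ℝ) {w : E} (hw : ⟪u, w⟫ = 0) :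
    ‖c • u + w‖ ^ 2 = c ^ 2 + ‖w‖ ^ 2 := by
  have := norm_add_sq_eq_norm_sq_add_norm_sq_real (x := c • u)
    (by rw [real_inner_smul_left, hw, mul_zero])
  rw [norm_smul, hu, Real.norm_eq_abs] at this
  nlinarith [sq_abs c]

theorem sphere_inter_inner_eq_image (hu : ‖u‖ = 1) {r c : ℝ} (hc : |c| ≤ r) :
    {x ∈ sphere (0 : E) r | ⟪u, x⟫ = c} =
      (fun w : (ℝ ∙ u)ᗮ => c • u + (w : E)) '' sphere 0 √(r ^ 2 - c ^ 2) := by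
  have hr : 0 ≤ r := (abs_nonneg c).trans hc
  have hcr : c ^ 2 ≤ r ^ 2 := sq_le_sq' (abs_le.mp hc).1 (abs_le.mp hc).2
  ext x
  simp only [mem_ofPred_eq, mem_sphere_zero_iff_norm, mem_image, Subtype.exists,
    Submodule.coe_norm, Submodule.mem_orthogonal_singleton_iff_inner_right]
  constructor
  · rintro ⟨hx, rfl⟩
    have hw : ⟪u, x - ⟪u, x⟫ • u⟫ = 0 := by
      rw [inner_sub_right, real_inner_smul_right, real_inner_self_eq_norm_sq, hu]; ring
    refine ⟨x - ⟪u, x⟫ • u, hw, ?_, add_sub_cancel _ _⟩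
    have := norm_smul_add_sq_of_inner_eq_zero hu ⟪u, x⟫ hw
    rw [add_sub_cancel, hx] at this
    rw [← Real.sqrt_sq (norm_nonneg _)]
    congr 1
    linarith
  · rintro ⟨w, hw, hwn, rfl⟩
    refine ⟨?_, ?_⟩
    · rw [← Real.sqrt_sq (norm_nonneg _), norm_smul_add_sq_of_inner_eq_zero hu c hw, hwn,
        Real.sq_sqrt (by linarith), add_sub_cancel, Real.sqrt_sq hr]
    · rw [inner_add_right, real_inner_smul_right, real_inner_self_eq_norm_sq, hu, hw]; ring

theorem isConnected_sphere_inter_inner_eq [FiniteDimensional ℝ E] (hE : 2 < finrank ℝ E)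
    (hu : ‖u‖ = 1) {r c : ℝ} (hc : |c| ≤ r) :
    IsConnected {x ∈ sphere (0 : E) r | ⟪u, x⟫ = c} := by
  have hrank : 1 < finrank ℝ (ℝ ∙ u)ᗮ := by
    have := (ℝ ∙ u).finrank_add_finrank_orthogonal
    rw [finrank_span_singleton (norm_ne_zero_iff.mp (hu ▸ one_ne_zero))] at this
    omega
  rw [sphere_inter_inner_eq_image hu hc]
  refine (isConnected_sphere ?_ 0 (Real.sqrt_nonneg _)).image _ (by fun_prop)
  rw [← finrank_eq_rank]
  exact_mod_cast hrank

end SphereSlice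

/-- The Reeb quotient of the height function on the unit sphere `S^m` (`m ≥ 2`):
identify two points of the sphere when they lie in the same connected component of the
same level set of the first coordinate. The induced map to `[-1, 1]` is a
homeomorphism; i.e. the Reeb graph of the natural height function is homeomorphic to a
closed interval. -/
theorem reeb_graph_of_height_is_interval (m : ℕ) (hm : 2 ≤ m) :
    ∃ φ : Quot (fun x y : sphere (0 : EuclideanSpace ℝ (Fin (m + 1))) 1 =>
          y ∈ connectedComponentIn
            {z : sphere (0 : EuclideanSpace ℝ (Fin (m + 1))) 1 |
              (z : EuclideanSpace ℝ (Fin (m + 1))) 0 =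
                (x : EuclideanSpace ℝ (Fin (m + 1))) 0} x) ≃ₜ Set.Icc (-1 : ℝ) 1,
      ∀ x : sphere (0 : EuclideanSpace ℝ (Fin (m + 1))) 1,
        (φ (Quot.mk _ x) : ℝ) = (x : EuclideanSpace ℝ (Fin (m + 1))) 0 := by
  set S := sphere (0 : EuclideanSpace ℝ (Fin (m + 1))) 1
  set height : S → ℝ := (fun y => y 0) ∘ Subtype.val
  have hslice : ∀ c ∈ Icc (-1 : ℝ) 1, IsConnected (Subtype.val '' (height ⁻¹' {c})) := by
    intro c hc
    rw [preimage_comp, Subtype.image_preimage_coe]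
    simpa [S, EuclideanSpace.inner_single_left, Set.inter_def] using
      isConnected_sphere_inter_inner_eq (u := EuclideanSpace.single (0 : Fin (m + 1)) (1 : ℝ))
        (by simp only [finrank_euclideanSpace, Fintype.card_fin]; omega) (by simp) (abs_le.mpr hc)
  have hrange : range height = Icc (-1) 1 := by
    refine Subset.antisymm (range_subset_iff.mpr fun x => abs_le.mp ?_) fun c hc => ?_
    · exact (PiLp.norm_apply_le x.1 0).trans (mem_sphere_zero_iff_norm.mp x.2).le
    · obtain ⟨_, x, hx, -⟩ := (hslice c hc).nonempty
      exact ⟨x, hx⟩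
  have hfib : ∀ x, IsPreconnected (height ⁻¹' {height x}) := fun x =>
    IsInducing.subtypeVal.isPreconnected_image.mp
      (hslice _ (hrange ▸ mem_range_self x)).isPreconnected
  -- The relation in the statement is `ReebRel height` up to unfolding.
  obtain ⟨φ, hφ⟩ := exists_homeomorph_quot_reebRel_range (by fun_prop) hfib
  exact ⟨φ.trans (Homeomorph.setCongr hrange), hφ⟩
end

section
/- The image of M under the projection π : (x, y) ↦ x equals the set {x ∈ ℝ² : for every j' : Fin l', the product ∏_{j with m(j) = j'} f_j(x) is nonnegative}. In particular, since each f_j is nonnegative on D̄ := {x ∈ ℝ² : f_j(x) ≥ 0 for all j}, the closure region D̄ is contained in π(M). -/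
theorem exists_norm_sq_eq (E : Type*) [NormedAddCommGroup E] [NormedSpace ℝ E] [Nontrivial E]
    {c : ℝ} (hc : 0 ≤ c) : ∃ y : E, ‖y‖ ^ 2 = c := by
  obtain ⟨y, hy⟩ := exists_norm_eq E (Real.sqrt_nonneg c)
  exact ⟨y, by rw [hy, Real.sq_sqrt hc]⟩

theorem image_fst_setOf_forall_eq_norm_sq {X ι : Type*} {E : ι → Type*}
    [∀ i, NormedAddCommGroup (E i)] [∀ i, NormedSpace ℝ (E i)] [∀ i, Nontrivial (E i)]
    (g : ι → X → ℝ) :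
    Prod.fst '' {z : X × Π i, E i | ∀ i, g i z.1 = ‖z.2 i‖ ^ 2} = {x | ∀ i, 0 ≤ g i x} := by
  ext x
  constructor
  · rintro ⟨⟨x, y⟩, hy, rfl⟩ i
    rw [hy i]
    positivity
  · intro hx
    choose y hy using fun i => exists_norm_sq_eq (E i) (hx i)
    exact ⟨(x, y), fun i => (hy i).symm, rfl⟩

theorem circle_construction_image_general_general (l l' : ℕ)
    (mlab : Fin l → Fin l') (I : Fin l' → ℕ)
    (p : Fin l → EuclideanSpace ℝ (Fin 2)) (r : Fin l → ℝ) :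
    Prod.fst ''
        {z : EuclideanSpace ℝ (Fin 2) × Π j' : Fin l', EuclideanSpace ℝ (Fin (I j' + 1)) |
          ∀ j' : Fin l',
            ∏ j ∈ Finset.univ.filter (fun j => mlab j = j'),
              (r j ^ 2 - ‖z.1 - p j‖ ^ 2) = ‖z.2 j'‖ ^ 2} =
      {x : EuclideanSpace ℝ (Fin 2) | ∀ j' : Fin l',
        0 ≤ ∏ j ∈ Finset.univ.filter (fun j => mlab j = j'), (r j ^ 2 - ‖x - p j‖ ^ 2)} ∧
    {x : EuclideanSpace ℝ (Fin 2) | ∀ j : Fin l, 0 ≤ r j ^ 2 - ‖x - p j‖ ^ 2} ⊆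
      Prod.fst ''
        {z : EuclideanSpace ℝ (Fin 2) × Π j' : Fin l', EuclideanSpace ℝ (Fin (I j' + 1)) |
          ∀ j' : Fin l',
            ∏ j ∈ Finset.univ.filter (fun j => mlab j = j'),
              (r j ^ 2 - ‖z.1 - p j‖ ^ 2) = ‖z.2 j'‖ ^ 2} := by
  have image_eq := image_fst_setOf_forall_eq_norm_sq
    (E := fun j' => EuclideanSpace ℝ (Fin (I j' + 1)))
    fun j' x => ∏ j ∈ Finset.univ.filter (fun j => mlab j = j'), (r j ^ 2 - ‖x - p j‖ ^ 2)
  refine ⟨image_eq, ?_⟩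
  rw [image_eq]
  exact fun x hx j' => Finset.prod_nonneg fun j _ => hx j

/-- For the circle construction `M = {(x,y) : ∀ j', ∏_{m(j)=j'} f_j(x) = ‖y_{j'}‖²}` with
`f_j(x) = r_j² - ‖x - p_j‖²`, the image of `M` under the projection `(x,y) ↦ x` is
exactly the set of points where all the products are nonnegative; in particular the
region `D̄ = {x : f_j(x) ≥ 0 for all j}` is contained in this image. -/
theorem circle_construction_image_general (l l' : ℕ) (hl : 0 < l) (hl' : 0 < l')
    (mlab : Fin l → Fin l') (I : Fin l' → ℕ)
    (p : Fin l → EuclideanSpace ℝ (Fin 2)) (r : Fin l → ℝ) (hr : ∀ j, 0 < r j) :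
    Prod.fst ''
        {z : EuclideanSpace ℝ (Fin 2) × Π j' : Fin l', EuclideanSpace ℝ (Fin (I j' + 1)) |
          ∀ j' : Fin l',
            ∏ j ∈ Finset.univ.filter (fun j => mlab j = j'),
              (r j ^ 2 - ‖z.1 - p j‖ ^ 2) = ‖z.2 j'‖ ^ 2} =
      {x : EuclideanSpace ℝ (Fin 2) | ∀ j' : Fin l',
        0 ≤ ∏ j ∈ Finset.univ.filter (fun j => mlab j = j'), (r j ^ 2 - ‖x - p j‖ ^ 2)} ∧
    {x : EuclideanSpace ℝ (Fin 2) | ∀ j : Fin l, 0 ≤ r j ^ 2 - ‖x - p j‖ ^ 2} ⊆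
      Prod.fst ''
        {z : EuclideanSpace ℝ (Fin 2) × Π j' : Fin l', EuclideanSpace ℝ (Fin (I j' + 1)) |
          ∀ j' : Fin l',
            ∏ j ∈ Finset.univ.filter (fun j => mlab j = j'),
              (r j ^ 2 - ‖z.1 - p j‖ ^ 2) = ‖z.2 j'‖ ^ 2} :=
  circle_construction_image_general_general l l' mlab I p r
end

section
/- If the set {x ∈ ℝ² : for every j' : Fin l', the product ∏_{j with m(j) = j'} f_j(x) is nonnegative} is bounded, then M is a compact subset of ℝ² × Π_{j' : Fin l'} EuclideanSpace ℝ (Fin (I_{j'} + 1)). -/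
open Metric

/-! Each `y_{j'}` has squared norm `g_{j'}(x) ≥ 0`, so the `x`-coordinates of points of `M` lie in
the bounded region where all `g_{j'}` are nonnegative; on its compact closure the continuous
`g_{j'}` are bounded, which bounds the `y_{j'}`. Hence `M` is a closed subset of a product of a
compact set with closed balls. -/

theorem isCompact_setOf_forall_eq_norm_sq {X ι : Type*} {Y : ι → Type*} [MetricSpace X]
    [ProperSpace X] [Finite ι] [∀ i, NormedAddCommGroup (Y i)] [∀ i, ProperSpace (Y i)]
    {g : ι → X → ℝ} (hg : ∀ i, Continuous (g i))
    (hbdd : Bornology.IsBounded {x | ∀ i, 0 ≤ g i x}) :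
    IsCompact {z : X × Π i, Y i | ∀ i, g i z.1 = ‖z.2 i‖ ^ 2} := by
  have hK := hbdd.isCompact_closure
  choose C hC using fun i => hK.exists_bound_of_continuousOn (hg i).continuousOn
  refine (hK.prod (isCompact_univ_pi fun i => isCompact_closedBall (0 : Y i) √(C i)))
    |>.of_isClosed_subset ?_ ?_
  · simp only [Set.ofPred_forall]
    exact isClosed_iInter fun i => isClosed_eq (by fun_prop) (by fun_prop)
  · rintro ⟨x, y⟩ hz
    have hx : x ∈ closure {x | ∀ i, 0 ≤ g i x} :=
      subset_closure fun i => (hz i).symm ▸ sq_nonneg _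
    refine ⟨hx, fun i _ => mem_closedBall_zero_iff.2 (Real.le_sqrt_of_sq_le ?_)⟩
    calc ‖y i‖ ^ 2 = g i x := (hz i).symm
      _ ≤ ‖g i x‖ := le_abs_self _
      _ ≤ C i := hC i x hx

theorem circle_construction_compact_general (l l' : ℕ)
    (mlab : Fin l → Fin l') (I : Fin l' → ℕ)
    (p : Fin l → EuclideanSpace ℝ (Fin 2)) (r : Fin l → ℝ)
    (hbdd : Bornology.IsBounded
      {x : EuclideanSpace ℝ (Fin 2) | ∀ j' : Fin l',
        0 ≤ ∏ j ∈ Finset.univ.filter (fun j => mlab j = j'), (r j ^ 2 - ‖x - p j‖ ^ 2)}) :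
    IsCompact
      {z : EuclideanSpace ℝ (Fin 2) × Π j' : Fin l', EuclideanSpace ℝ (Fin (I j' + 1)) |
        ∀ j' : Fin l',
          ∏ j ∈ Finset.univ.filter (fun j => mlab j = j'),
            (r j ^ 2 - ‖z.1 - p j‖ ^ 2) = ‖z.2 j'‖ ^ 2} :=
  isCompact_setOf_forall_eq_norm_sq (fun _ => by fun_prop) hbdd

/-- If the region `{x : ∀ j', ∏_{m(j)=j'} f_j(x) ≥ 0}` is bounded, then the real
algebraic set `M = {(x,y) : ∀ j', ∏_{m(j)=j'} f_j(x) = ‖y_{j'}‖²}` (with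
`f_j(x) = r_j² - ‖x - p_j‖²`) is compact. -/
theorem circle_construction_compact (l l' : ℕ) (hl : 0 < l) (hl' : 0 < l')
    (mlab : Fin l → Fin l') (I : Fin l' → ℕ)
    (p : Fin l → EuclideanSpace ℝ (Fin 2)) (r : Fin l → ℝ) (hr : ∀ j, 0 < r j)
    (hbdd : Bornology.IsBounded
      {x : EuclideanSpace ℝ (Fin 2) | ∀ j' : Fin l',
        0 ≤ ∏ j ∈ Finset.univ.filter (fun j => mlab j = j'), (r j ^ 2 - ‖x - p j‖ ^ 2)}) :
    IsCompact
      {z : EuclideanSpace ℝ (Fin 2) × Π j' : Fin l', EuclideanSpace ℝ (Fin (I j' + 1)) |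
        ∀ j' : Fin l',
          ∏ j ∈ Finset.univ.filter (fun j => mlab j = j'),
            (r j ^ 2 - ‖z.1 - p j‖ ^ 2) = ‖z.2 j'‖ ^ 2} :=
  circle_construction_compact_general l l' mlab I p r hbdd
end

section
/- Let E be a real normed vector space and let f : Fin n → E → ℝ and g : Fin n' → E → ℝ be two families of functions, each differentiable at a point x₀ ∈ E. Suppose there are indices j₁ and j₂ with f_{j₁}(x₀) = 0 and g_{j₂}(x₀) = 0, that f_i(x₀) > 0 for i ≠ j₁ and g_i(x₀) > 0 for i ≠ j₂, and that the continuous linear functionals fderiv ℝ f_{j₁} x₀ and fderiv ℝ g_{j₂} x₀ are linearly independent. Then the Fréchet derivative at x₀ of the map x ↦ (∏_i f_i(x), ∏_i g_i(x)) from E to ℝ² is surjective. -/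
/-!
Since `f j₁ x₀ = 0`, the product rule leaves a single term: the derivative of `∏ i, f i` at `x₀`
is `c₁ • fderiv ℝ (f j₁) x₀` with `c₁ = ∏ i ≠ j₁, f i x₀ > 0`, and likewise for `g`. Rescaling by
nonzero constants preserves linear independence, and linearly independent functionals
`φ : ι → Module.Dual K V` jointly map onto `ι → K`: the vectors `(φ i v)ᵢ` span `ι → K` exactly
when the `φ i` are linearly independent.
-/

theorem LinearMap.surjective_pi_of_linearIndependent {ι K V : Type*} [Finite ι] [Field K]
    [AddCommGroup V] [Module K V] {φ : ι → Module.Dual K V} (h : LinearIndependent K φ) :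
    Function.Surjective (LinearMap.pi φ) := by
  have hfun : LinearIndependent K fun i => ⇑(φ i) :=
    h.map' (LinearMap.ltoFun K V K K) (LinearMap.ker_eq_bot.mpr DFunLike.coe_injective)
  rw [← LinearMap.range_eq_top, ← Submodule.span_eq (LinearMap.range _)]
  exact span_flip_eq_top_iff_linearIndependent.mpr hfun

theorem LinearMap.surjective_prod_of_linearIndependent {K V : Type*} [Field K]
    [AddCommGroup V] [Module K V] {φ ψ : Module.Dual K V} (h : LinearIndependent K ![φ, ψ]) :
    Function.Surjective (φ.prod ψ) := by
  have := (LinearEquiv.piFinTwo K fun _ => K).surjective.comp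
    (LinearMap.surjective_pi_of_linearIndependent h)
  convert this using 1
  ext v <;> simp

theorem ContinuousLinearMap.surjective_prod_of_linearIndependent {𝕜 E : Type*}
    [NontriviallyNormedField 𝕜] [NormedAddCommGroup E] [NormedSpace 𝕜 E] {L M : E →L[𝕜] 𝕜}
    (h : LinearIndependent 𝕜 ![L, M]) : Function.Surjective (L.prod M) := by
  refine LinearMap.surjective_prod_of_linearIndependent (LinearIndependent.pair_iff.mpr ?_)
  exact fun s t hst => LinearIndependent.pair_iff.mp h s t (coe_injective (by simpa using hst))

theorem HasFDerivAt.finsetProd_of_eq_zero {𝕜 E 𝔸 ι : Type*} [NontriviallyNormedField 𝕜]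
    [NormedAddCommGroup E] [NormedSpace 𝕜 E] [NormedCommRing 𝔸] [NormedAlgebra 𝕜 𝔸]
    [DecidableEq ι] {u : Finset ι} {f : ι → E → 𝔸} {f' : ι → E →L[𝕜] 𝔸} {x : E}
    (hf : ∀ i ∈ u, HasFDerivAt (f i) (f' i) x) {j : ι} (hj : j ∈ u) (hfj : f j x = 0) :
    HasFDerivAt (∏ i ∈ u, f i ·) ((∏ i ∈ u.erase j, f i x) • f' j) x := by
  convert HasFDerivAt.finsetProd hf using 1
  rw [Finset.sum_eq_single_of_mem j hj fun i _ hij => ?_]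
  rw [Finset.prod_eq_zero (Finset.mem_erase.mpr ⟨Ne.symm hij, hj⟩) hfj, zero_smul 𝔸 (f' i)]

/-- If each `f i` and `g i` is differentiable at `x₀`, `f j₁` and `g j₂` vanish at `x₀`
with linearly independent derivatives, and the other factors are positive at `x₀`, then
the derivative at `x₀` of `x ↦ (∏ i, f i x, ∏ i, g i x) : E → ℝ × ℝ` is surjective. -/
theorem fderiv_pair_of_products_surjective {E : Type*} [NormedAddCommGroup E]
    [NormedSpace ℝ E] (n n' : ℕ) (f : Fin n → E → ℝ) (g : Fin n' → E → ℝ) (x₀ : E)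
    (hdf : ∀ i, DifferentiableAt ℝ (f i) x₀) (hdg : ∀ i, DifferentiableAt ℝ (g i) x₀)
    (j₁ : Fin n) (j₂ : Fin n') (hf0 : f j₁ x₀ = 0) (hg0 : g j₂ x₀ = 0)
    (hfpos : ∀ i, i ≠ j₁ → 0 < f i x₀) (hgpos : ∀ i, i ≠ j₂ → 0 < g i x₀)
    (hindep : LinearIndependent ℝ ![fderiv ℝ (f j₁) x₀, fderiv ℝ (g j₂) x₀]) :
    Function.Surjective
      (fderiv ℝ (fun x => (∏ i, f i x, ∏ i, g i x)) x₀ : E →L[ℝ] ℝ × ℝ) := by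
  have hf := HasFDerivAt.finsetProd_of_eq_zero (fun i _ => (hdf i).hasFDerivAt)
    (Finset.mem_univ j₁) hf0
  have hg := HasFDerivAt.finsetProd_of_eq_zero (fun i _ => (hdg i).hasFDerivAt)
    (Finset.mem_univ j₂) hg0
  have hcf : 0 < ∏ i ∈ Finset.univ.erase j₁, f i x₀ :=
    Finset.prod_pos fun i hi => hfpos i (Finset.ne_of_mem_erase hi)
  have hcg : 0 < ∏ i ∈ Finset.univ.erase j₂, g i x₀ :=
    Finset.prod_pos fun i hi => hgpos i (Finset.ne_of_mem_erase hi)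
  rw [(hf.prodMk hg).fderiv]
  exact ContinuousLinearMap.surjective_prod_of_linearIndependent
    ((LinearIndependent.pair_smul_smul_iff hcf.ne'.isUnit hcg.ne'.isUnit).mpr hindep)
end

section
/- Assume: (i) for every x ∈ D̄ := {x ∈ ℝ² : f_j(x) ≥ 0 for all j}, at most two of the values f_j(x) vanish; and (ii) whenever j₁ ≠ j₂ and x ∈ D̄ satisfy f_{j₁}(x) = f_{j₂}(x) = 0, the derivatives fderiv ℝ f_{j₁} x and fderiv ℝ f_{j₂} x are linearly independent and the labels satisfy m(j₁) ≠ m(j₂). Define F : ℝ² × Π_{j'} EuclideanSpace ℝ (Fin (I_{j'}+1)) → ℝ^{l'} by F(x, y)_{j'} = ∏_{j with m(j) = j'} f_j(x) - ‖y_{j'}‖². Then at every point (x, y) of the zero set M of F with x ∈ D̄, the Fréchet derivative fderiv ℝ F (x, y) is a surjective linear map onto ℝ^{l'}. (Hence M is a non-singular real algebraic set over D̄.) -/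
/-!
At a point `(x, y)` of `M`, the `j'`-th component of `dF` is
`(u, v) ↦ dP_{j'}(x) u - 2 ⟪y_{j'}, v_{j'}⟫` with `P_{j'} = ∏_{m(j) = j'} f_j`. Where
`y_{j'} ≠ 0` the direction `v_{j'}` alone reaches every value, so only the labels with
`y_{j'} = 0`, i.e. `P_{j'}(x) = 0`, constrain `u`. For such a label exactly one circle `S_j`
with `m(j) = j'` passes through `x`, since by (ii) circles through `x` carry distinct labels,
so `dP_{j'}(x)` is a nonzero multiple of `df_j(x)`. The differentials `df_j(x)` of the circles
through `x` are nonzero (`r_j > 0`), pairwise independent by (ii) and at most two by (i), hence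
linearly independent, and one `u` solves all the remaining equations at once.
-/

section LinearAlgebra

variable {ι K V : Type*} [Field K] [AddCommGroup V] [Module K V]

theorem LinearIndependent.exists_forall_apply_eq [Finite ι] {a : ι → V →ₗ[K] K}
    (ha : LinearIndependent K a) (c : ι → K) : ∃ u, ∀ i, a i u = c i := by
  have hfun : LinearIndependent K fun i => ⇑(a i) :=
    ha.map' (LinearMap.ltoFun K V K K) (LinearMap.ker_eq_bot.2 DFunLike.coe_injective)
  have hc : c ∈ LinearMap.range (LinearMap.pi a) := by
    refine Submodule.span_le.2 ?_
      ((span_flip_eq_top_iff_linearIndependent.2 hfun).symm ▸ Submodule.mem_top)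
    rintro _ ⟨u, rfl⟩
    exact ⟨u, rfl⟩
  obtain ⟨u, hu⟩ := hc
  exact ⟨u, fun i => congrFun hu i⟩

theorem linearIndependent_of_card_le_two [Fintype ι] {v : ι → V}
    (hcard : Fintype.card ι ≤ 2) (hne : ∀ i, v i ≠ 0)
    (hpair : ∀ i j, i ≠ j → LinearIndependent K ![v i, v j]) : LinearIndependent K v := by
  interval_cases h : Fintype.card ι
  · have := Fintype.card_eq_zero_iff.1 h
    exact linearIndependent_empty_type
  · have := (Fintype.card_eq_one_iff_nonempty_unique.1 h).some
    exact linearIndependent_unique_iff.2 (hne _)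
  · let e := Fintype.equivFinOfCardEq h
    refine (linearIndependent_equiv' e.symm ?_).1 (hpair (e.symm 0) (e.symm 1) (by simp))
    ext k
    fin_cases k <;> rfl

end LinearAlgebra

section SubNormSq

variable {ι E : Type*} [NormedAddCommGroup E] [NormedSpace ℝ E] {G : ι → Type*}
  [∀ i, NormedAddCommGroup (G i)] [∀ i, InnerProductSpace ℝ (G i)]

theorem exists_apply_sub_two_mul_inner_eq [Finite ι] {a : ι → E →L[ℝ] ℝ} {y : Π i, G i}
    (ha : LinearIndependent ℝ fun i : {i // y i = 0} => a i) (c : ι → ℝ) :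
    ∃ u, ∃ v : Π i, G i, ∀ i, a i u - 2 * inner ℝ (y i) (v i) = c i := by
  have ha' : LinearIndependent ℝ fun i : {i // y i = 0} => (a i : E →ₗ[ℝ] ℝ) :=
    ha.map' (ContinuousLinearMap.coeLM ℝ)
      (LinearMap.ker_eq_bot.2 ContinuousLinearMap.coe_injective)
  obtain ⟨u, hu⟩ := ha'.exists_forall_apply_eq fun i => c i
  refine ⟨u, fun i => ((a i u - c i) / (2 * ‖y i‖ ^ 2)) • y i, fun i => ?_⟩
  by_cases hy : y i = 0
  · simpa [hy] using hu ⟨i, hy⟩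
  · rw [real_inner_smul_right, real_inner_self_eq_norm_sq]
    field_simp
    ring

theorem surjective_fderiv_toLp_sub_norm_sq [Fintype ι] {P : ι → E → ℝ} {x : E} (y : Π i, G i)
    (hP : ∀ i, DifferentiableAt ℝ (P i) x)
    (hli : LinearIndependent ℝ fun i : {i // y i = 0} => fderiv ℝ (P i) x) :
    Function.Surjective (fderiv ℝ (fun w : E × Π i, G i =>
      (WithLp.toLp 2 fun i => P i w.1 - ‖w.2 i‖ ^ 2 : EuclideanSpace ℝ ι)) (x, y)) := by
  let proj : ∀ i, (E × Π i, G i) →L[ℝ] G i := fun i =>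
    (ContinuousLinearMap.proj i).comp (ContinuousLinearMap.snd ℝ E _)
  have hcomp : ∀ i, HasFDerivAt (fun w : E × Π i, G i => P i w.1 - ‖w.2 i‖ ^ 2)
      ((fderiv ℝ (P i) x).comp (ContinuousLinearMap.fst ℝ E _) -
        2 • (innerSL ℝ (y i)).comp (proj i)) (x, y) := by
    intro i
    have hfst := (hP i).hasFDerivAt.comp (x, y) (hasFDerivAt_fst (𝕜 := ℝ) (p := (x, y)))
    have hsnd : HasFDerivAt (fun w : E × Π i, G i => ‖w.2 i‖ ^ 2)
        (2 • (innerSL ℝ (y i)).comp (proj i)) (x, y) :=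
      ((proj i).hasFDerivAt (x := (x, y))).norm_sq
    exact hfst.sub hsnd
  have hF : HasFDerivAt (fun w : E × Π i, G i =>
      (WithLp.toLp 2 fun i => P i w.1 - ‖w.2 i‖ ^ 2 : EuclideanSpace ℝ ι))
      ((PiLp.continuousLinearEquiv 2 ℝ _).symm.toContinuousLinearMap.comp
        (ContinuousLinearMap.pi _)) (x, y) :=
    (PiLp.hasFDerivAt_toLp 2 _).comp (x, y) (hasFDerivAt_pi.2 hcomp)
  rw [hF.fderiv]
  intro c
  obtain ⟨u, v, huv⟩ :=
    exists_apply_sub_two_mul_inner_eq (a := fun i => fderiv ℝ (P i) x) hli c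
  refine ⟨(u, v), ?_⟩
  ext i
  simpa [proj] using huv i

end SubNormSq

theorem exists_fderiv_finsetProd_eq_smul_of_unique_zero {ι 𝕜 E : Type*} [DecidableEq ι]
    [NontriviallyNormedField 𝕜] [NormedAddCommGroup E] [NormedSpace 𝕜 E]
    {u : Finset ι} {g : ι → E → 𝕜} {x : E} (hg : ∀ j ∈ u, DifferentiableAt 𝕜 (g j) x)
    {i : ι} (hi : i ∈ u) (h0 : g i x = 0) (hunique : ∀ j ∈ u, g j x = 0 → j = i) :
    ∃ c ≠ (0 : 𝕜), fderiv 𝕜 (∏ j ∈ u, g j ·) x = c • fderiv 𝕜 (g i) x := by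
  refine ⟨∏ j ∈ u.erase i, g j x, Finset.prod_ne_zero_iff.2 fun j hj hj0 =>
    (Finset.mem_erase.1 hj).1 (hunique j (Finset.mem_erase.1 hj).2 hj0), ?_⟩
  rw [fderiv_finsetProd hg]
  refine Finset.sum_eq_single_of_mem i hi fun j _ hji => ?_
  rw [Finset.prod_eq_zero (f := (g · x)) (Finset.mem_erase.2 ⟨hji.symm, hi⟩) h0]
  exact zero_smul 𝕜 (fderiv 𝕜 (g j) x)

section Circle

variable {E : Type*} [NormedAddCommGroup E] [InnerProductSpace ℝ E]

theorem hasFDerivAt_sq_sub_norm_sub_sq (p : E) (r : ℝ) (x : E) :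
    HasFDerivAt (fun y => r ^ 2 - ‖y - p‖ ^ 2) (-(2 • innerSL ℝ (x - p))) x := by
  simpa using (((hasFDerivAt_id x).sub_const p).norm_sq).const_sub (r ^ 2)

theorem fderiv_sq_sub_norm_sub_sq_ne_zero {p x : E} (r : ℝ) (hx : x ≠ p) :
    fderiv ℝ (fun y => r ^ 2 - ‖y - p‖ ^ 2) x ≠ 0 := by
  rw [(hasFDerivAt_sq_sub_norm_sub_sq p r x).fderiv]
  intro h
  have := congrArg (· (x - p)) h
  simp only [neg_apply, smul_apply, innerSL_apply_apply, real_inner_self_eq_norm_sq, zero_apply,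
    neg_eq_zero, smul_eq_zero, OfNat.ofNat_ne_zero, false_or, pow_eq_zero_iff two_ne_zero,
    norm_eq_zero, sub_eq_zero] at this
  exact hx this

end Circle

theorem circle_construction_nonsingular_general (l l' : ℕ)
    (mlab : Fin l → Fin l') (I : Fin l' → ℕ)
    (p : Fin l → EuclideanSpace ℝ (Fin 2)) (r : Fin l → ℝ) (hr : ∀ j, 0 < r j)
    (hi : ∀ x : EuclideanSpace ℝ (Fin 2), (∀ j : Fin l, 0 ≤ r j ^ 2 - ‖x - p j‖ ^ 2) →
      (Finset.univ.filter (fun j : Fin l => r j ^ 2 - ‖x - p j‖ ^ 2 = 0)).card ≤ 2)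
    (hii : ∀ j₁ j₂ : Fin l, j₁ ≠ j₂ → ∀ x : EuclideanSpace ℝ (Fin 2),
      (∀ j : Fin l, 0 ≤ r j ^ 2 - ‖x - p j‖ ^ 2) →
      r j₁ ^ 2 - ‖x - p j₁‖ ^ 2 = 0 → r j₂ ^ 2 - ‖x - p j₂‖ ^ 2 = 0 →
      LinearIndependent ℝ
          ![fderiv ℝ (fun y : EuclideanSpace ℝ (Fin 2) => r j₁ ^ 2 - ‖y - p j₁‖ ^ 2) x,
            fderiv ℝ (fun y : EuclideanSpace ℝ (Fin 2) => r j₂ ^ 2 - ‖y - p j₂‖ ^ 2) x] ∧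
        mlab j₁ ≠ mlab j₂) :
    ∀ z : EuclideanSpace ℝ (Fin 2) × Π j' : Fin l', EuclideanSpace ℝ (Fin (I j' + 1)),
      (∀ j' : Fin l',
        ∏ j ∈ Finset.univ.filter (fun j => mlab j = j'),
          (r j ^ 2 - ‖z.1 - p j‖ ^ 2) = ‖z.2 j'‖ ^ 2) →
      (∀ j : Fin l, 0 ≤ r j ^ 2 - ‖z.1 - p j‖ ^ 2) →
      Function.Surjective
        (fderiv ℝ
          (fun w : EuclideanSpace ℝ (Fin 2) × Π j' : Fin l', EuclideanSpace ℝ (Fin (I j' + 1)) =>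
            (WithLp.toLp 2 (fun j' : Fin l' =>
              (∏ j ∈ Finset.univ.filter (fun j => mlab j = j'),
                (r j ^ 2 - ‖w.1 - p j‖ ^ 2)) - ‖w.2 j'‖ ^ 2) :
              EuclideanSpace ℝ (Fin l'))) z) := by
  classical
  rintro ⟨x, y⟩ hzero hD
  set f : Fin l → EuclideanSpace ℝ (Fin 2) → ℝ := fun j w => r j ^ 2 - ‖w - p j‖ ^ 2
  have hdiff : ∀ j, DifferentiableAt ℝ (f j) x := fun j =>
    (hasFDerivAt_sq_sub_norm_sub_sq (p j) (r j) x).differentiableAt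
  refine surjective_fderiv_toLp_sub_norm_sq
    (P := fun j' w => ∏ j ∈ Finset.univ.filter (mlab · = j'), f j w) y
    (fun _ => (HasFDerivAt.finsetProd fun j _ => (hdiff j).hasFDerivAt).differentiableAt) ?_
  have hcircles : LinearIndependent ℝ fun j : {j // f j x = 0} => fderiv ℝ (f j) x :=
    linearIndependent_of_card_le_two ((Fintype.card_subtype _).trans_le (hi x hD))
      (fun j => fderiv_sq_sub_norm_sub_sq_ne_zero _ fun hx =>
        (hr j).ne' (by simpa [f, hx] using j.2))
      fun j₁ j₂ hne => (hii _ _ (Subtype.coe_injective.ne hne) x hD j₁.2 j₂.2).1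
  have hvanish : ∀ j' : {j' // y j' = 0}, ∃ j : {j // f j x = 0}, mlab j = j' := by
    rintro ⟨j', hj'⟩
    have hprod : ∏ j ∈ Finset.univ.filter (mlab · = j'), f j x = 0 := by
      simp [f, hzero j', hj']
    obtain ⟨j, hj, h0⟩ := Finset.prod_eq_zero_iff.1 hprod
    exact ⟨⟨j, h0⟩, (Finset.mem_filter.1 hj).2⟩
  choose σ hσ using hvanish
  have hσinj : Function.Injective σ := fun j₁ j₂ h =>
    Subtype.ext ((hσ j₁).symm.trans ((congrArg (mlab ·.1) h).trans (hσ j₂)))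
  have hfactor : ∀ j' : {j' // y j' = 0}, ∃ c ≠ (0 : ℝ),
      fderiv ℝ (∏ j ∈ Finset.univ.filter (mlab · = j'), f j ·) x = c • fderiv ℝ (f (σ j')) x :=
    fun j' => exists_fderiv_finsetProd_eq_smul_of_unique_zero (fun j _ => hdiff j)
      (Finset.mem_filter.2 ⟨Finset.mem_univ _, hσ j'⟩) (σ j').2 fun k hk h0 =>
        by_contra fun hne => (hii k (σ j') hne x hD h0 (σ j').2).2
          ((Finset.mem_filter.1 hk).2.trans (hσ j').symm)
  choose c hc0 hc using hfactor
  convert (hcircles.comp σ hσinj).units_smul fun j' => Units.mk0 _ (hc0 j') using 1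
  funext j'
  exact hc j'

/-- Non-singularity of the circle construction over `D̄`: assume no point of
`D̄ = {x : f_j(x) ≥ 0 for all j}` lies on more than two circles, and that whenever two
circles meet at a point of `D̄` their derivatives there are linearly independent and
their labels differ. Then at every point `(x, y)` of the zero set
`M = {F = 0}` of `F(x,y)_{j'} = ∏_{m(j)=j'} f_j(x) - ‖y_{j'}‖²` with `x ∈ D̄`, the
Fréchet derivative of `F` is surjective onto `ℝ^{l'}`. -/
theorem circle_construction_nonsingular (l l' : ℕ) (hl : 0 < l) (hl' : 0 < l')
    (mlab : Fin l → Fin l') (I : Fin l' → ℕ)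
    (p : Fin l → EuclideanSpace ℝ (Fin 2)) (r : Fin l → ℝ) (hr : ∀ j, 0 < r j)
    (hi : ∀ x : EuclideanSpace ℝ (Fin 2), (∀ j : Fin l, 0 ≤ r j ^ 2 - ‖x - p j‖ ^ 2) →
      (Finset.univ.filter (fun j : Fin l => r j ^ 2 - ‖x - p j‖ ^ 2 = 0)).card ≤ 2)
    (hii : ∀ j₁ j₂ : Fin l, j₁ ≠ j₂ → ∀ x : EuclideanSpace ℝ (Fin 2),
      (∀ j : Fin l, 0 ≤ r j ^ 2 - ‖x - p j‖ ^ 2) →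
      r j₁ ^ 2 - ‖x - p j₁‖ ^ 2 = 0 → r j₂ ^ 2 - ‖x - p j₂‖ ^ 2 = 0 →
      LinearIndependent ℝ
          ![fderiv ℝ (fun y : EuclideanSpace ℝ (Fin 2) => r j₁ ^ 2 - ‖y - p j₁‖ ^ 2) x,
            fderiv ℝ (fun y : EuclideanSpace ℝ (Fin 2) => r j₂ ^ 2 - ‖y - p j₂‖ ^ 2) x] ∧
        mlab j₁ ≠ mlab j₂) :
    ∀ z : EuclideanSpace ℝ (Fin 2) × Π j' : Fin l', EuclideanSpace ℝ (Fin (I j' + 1)),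
      (∀ j' : Fin l',
        ∏ j ∈ Finset.univ.filter (fun j => mlab j = j'),
          (r j ^ 2 - ‖z.1 - p j‖ ^ 2) = ‖z.2 j'‖ ^ 2) →
      (∀ j : Fin l, 0 ≤ r j ^ 2 - ‖z.1 - p j‖ ^ 2) →
      Function.Surjective
        (fderiv ℝ
          (fun w : EuclideanSpace ℝ (Fin 2) × Π j' : Fin l', EuclideanSpace ℝ (Fin (I j' + 1)) =>
            (WithLp.toLp 2 (fun j' : Fin l' =>
              (∏ j ∈ Finset.univ.filter (fun j => mlab j = j'),
                (r j ^ 2 - ‖w.1 - p j‖ ^ 2)) - ‖w.2 j'‖ ^ 2) :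
              EuclideanSpace ℝ (Fin l'))) z) :=
  circle_construction_nonsingular_general l l' mlab I p r hr hi hii
end

section
/- Let D' := {x ∈ ℝ² : for every j' : Fin l', the product ∏_{j with m(j) = j'} f_j(x) is nonnegative}. If D' is nonempty, connected, and bounded, and if I_{j'} ≥ 1 for every j' : Fin l', then M is a nonempty connected subset of ℝ² × Π_{j' : Fin l'} EuclideanSpace ℝ (Fin (I_{j'} + 1)). -/
/-!
`M` is the image of the connected set `D' × ∏_{j'} S^{I_{j'}}` under the continuous map
`(x, u) ↦ (x, (√(g_{j'} x) • u_{j'})_{j'})`, where `g_{j'} = ∏_{m(j)=j'} f_j`: every `y` with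
`‖y‖² = g_{j'} x` is `√(g_{j'} x)` times a unit vector. The spheres are connected because
`I_{j'} ≥ 1`.
-/

open Metric Set

theorem isConnected_sphere_euclideanSpace {n : ℕ} (hn : 1 ≤ n) {r : ℝ} (hr : 0 ≤ r) :
    IsConnected (sphere (0 : EuclideanSpace ℝ (Fin (n + 1))) r) := by
  refine isConnected_sphere ?_ 0 hr
  rw [← Module.finrank_eq_rank, finrank_euclideanSpace_fin]
  exact_mod_cast Nat.lt_succ_of_le hn

theorem exists_mem_sphere_norm_smul_eq {F : Type*} [NormedAddCommGroup F] [NormedSpace ℝ F]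
    (hF : (sphere (0 : F) 1).Nonempty) (v : F) : ∃ u ∈ sphere (0 : F) 1, ‖v‖ • u = v := by
  by_cases hv : v = 0
  · obtain ⟨u, hu⟩ := hF
    exact ⟨u, hu, by simp [hv]⟩
  · refine ⟨‖v‖⁻¹ • v, ?_, ?_⟩
    · rw [mem_sphere_zero_iff_norm, norm_smul, norm_inv, norm_norm,
        inv_mul_cancel₀ (norm_ne_zero_iff.mpr hv)]
    · rw [smul_smul, mul_inv_cancel₀ (norm_ne_zero_iff.mpr hv), one_smul]

section ScaledSpheres

variable {X ι : Type*} {E : ι → Type*}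
  [∀ i, NormedAddCommGroup (E i)] [∀ i, NormedSpace ℝ (E i)]

theorem image_sqrt_smul_prod_sphere (g : ι → X → ℝ)
    (hS : ∀ i, (sphere (0 : E i) 1).Nonempty) :
    (fun z : X × Π i, E i => (z.1, fun i => √(g i z.1) • z.2 i)) ''
        ({x | ∀ i, 0 ≤ g i x} ×ˢ univ.pi fun i => sphere (0 : E i) 1) =
      {z : X × Π i, E i | ∀ i, g i z.1 = ‖z.2 i‖ ^ 2} := by
  ext z
  constructor
  · rintro ⟨⟨x, u⟩, ⟨hx, hu⟩, rfl⟩ i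
    have hu1 : ‖u i‖ = 1 := mem_sphere_zero_iff_norm.mp (hu i (mem_univ i))
    simp only [norm_smul, hu1, mul_one, Real.norm_eq_abs, abs_of_nonneg (Real.sqrt_nonneg _),
      Real.sq_sqrt (hx i)]
  · obtain ⟨x, y⟩ := z
    intro hy
    choose u hu huy using fun i => exists_mem_sphere_norm_smul_eq (hS i) (y i)
    have hsqrt : ∀ i, √(g i x) = ‖y i‖ := fun i => by
      rw [hy i, Real.sqrt_sq (norm_nonneg _)]
    refine ⟨(x, u), ⟨fun i => (hy i).symm ▸ by positivity, fun i _ => hu i⟩, ?_⟩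
    simp only [hsqrt, huy]

theorem isConnected_setOf_forall_eq_norm_sq [TopologicalSpace X] (g : ι → X → ℝ)
    (hg : ∀ i, Continuous (g i)) (hD : IsConnected {x | ∀ i, 0 ≤ g i x})
    (hS : ∀ i, IsConnected (sphere (0 : E i) 1)) :
    IsConnected {z : X × Π i, E i | ∀ i, g i z.1 = ‖z.2 i‖ ^ 2} := by
  rw [← image_sqrt_smul_prod_sphere g fun i => (hS i).nonempty]
  refine (hD.prod (isConnected_univ_pi.mpr hS)).image _ (Continuous.continuousOn ?_)
  exact continuous_fst.prodMk <| continuous_pi fun i =>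
    ((hg i).comp continuous_fst).sqrt.smul ((continuous_apply i).comp continuous_snd)

end ScaledSpheres

theorem circle_construction_connected_general (l l' : ℕ)
    (mlab : Fin l → Fin l') (I : Fin l' → ℕ)
    (p : Fin l → EuclideanSpace ℝ (Fin 2)) (r : Fin l → ℝ)
    (hne : {x : EuclideanSpace ℝ (Fin 2) | ∀ j' : Fin l',
      0 ≤ ∏ j ∈ Finset.univ.filter (fun j => mlab j = j'),
        (r j ^ 2 - ‖x - p j‖ ^ 2)}.Nonempty)
    (hconn : IsPreconnected {x : EuclideanSpace ℝ (Fin 2) | ∀ j' : Fin l',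
      0 ≤ ∏ j ∈ Finset.univ.filter (fun j => mlab j = j'), (r j ^ 2 - ‖x - p j‖ ^ 2)})
    (hI : ∀ j' : Fin l', 1 ≤ I j') :
    IsConnected
      {z : EuclideanSpace ℝ (Fin 2) × Π j' : Fin l', EuclideanSpace ℝ (Fin (I j' + 1)) |
        ∀ j' : Fin l',
          ∏ j ∈ Finset.univ.filter (fun j => mlab j = j'),
            (r j ^ 2 - ‖z.1 - p j‖ ^ 2) = ‖z.2 j'‖ ^ 2} :=
  isConnected_setOf_forall_eq_norm_sq _
    (fun _ => continuous_finsetProd _ fun _ _ => by fun_prop) ⟨hne, hconn⟩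
    fun j' => isConnected_sphere_euclideanSpace (hI j') zero_le_one

/-- If the region `D' = {x : ∀ j', ∏_{m(j)=j'} f_j(x) ≥ 0}` is nonempty, connected and
bounded, and every `I_{j'}` is at least `1`, then the real algebraic set
`M = {(x,y) : ∀ j', ∏_{m(j)=j'} f_j(x) = ‖y_{j'}‖²}` is nonempty and connected. -/
theorem circle_construction_connected (l l' : ℕ) (hl : 0 < l) (hl' : 0 < l')
    (mlab : Fin l → Fin l') (I : Fin l' → ℕ)
    (p : Fin l → EuclideanSpace ℝ (Fin 2)) (r : Fin l → ℝ) (hr : ∀ j, 0 < r j)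
    (hne : {x : EuclideanSpace ℝ (Fin 2) | ∀ j' : Fin l',
      0 ≤ ∏ j ∈ Finset.univ.filter (fun j => mlab j = j'),
        (r j ^ 2 - ‖x - p j‖ ^ 2)}.Nonempty)
    (hconn : IsPreconnected {x : EuclideanSpace ℝ (Fin 2) | ∀ j' : Fin l',
      0 ≤ ∏ j ∈ Finset.univ.filter (fun j => mlab j = j'), (r j ^ 2 - ‖x - p j‖ ^ 2)})
    (hbdd : Bornology.IsBounded {x : EuclideanSpace ℝ (Fin 2) | ∀ j' : Fin l',
      0 ≤ ∏ j ∈ Finset.univ.filter (fun j => mlab j = j'), (r j ^ 2 - ‖x - p j‖ ^ 2)})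
    (hI : ∀ j' : Fin l', 1 ≤ I j') :
    IsConnected
      {z : EuclideanSpace ℝ (Fin 2) × Π j' : Fin l', EuclideanSpace ℝ (Fin (I j' + 1)) |
        ∀ j' : Fin l',
          ∏ j ∈ Finset.univ.filter (fun j => mlab j = j'),
            (r j ^ 2 - ‖z.1 - p j‖ ^ 2) = ‖z.2 j'‖ ^ 2} :=
  circle_construction_connected_general l l' mlab I p r hne hconn hI
end

section
/- Suppose (x, y) ∈ M satisfies f_j(x) > 0 for every j : Fin l. Then y_{j'} ≠ 0 for every j' : Fin l', and the Fréchet derivative at y of the map y ↦ (‖y_{j'}‖²)_{j'} from Π_{j'} EuclideanSpace ℝ (Fin (I_{j'}+1)) to ℝ^{l'} is surjective. (Consequently the derivative of the defining map F(x,y)_{j'} = ∏_{j with m(j)=j'} f_j(x) - ‖y_{j'}‖² is already surjective in the y-directions, so the projection of M to ℝ² has no singular points over the open region D = {x : f_j(x) > 0 for all j}.) -/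
/-! Each `‖y_{j'}‖²` is a product of positive numbers, so `y_{j'} ≠ 0`. The derivative of
`w ↦ (‖w_{j'}‖²)_{j'}` at `y` is `v ↦ (2⟪y_{j'}, v_{j'}⟫)_{j'}`, and its coordinates are
decoupled: the value `c` is attained at `v_{j'} = (c_{j'} / (2‖y_{j'}‖²)) • y_{j'}`. -/

section PiNormSq

variable {ι : Type*} [Fintype ι] {E : ι → Type*} [∀ i, NormedAddCommGroup (E i)]
  [∀ i, InnerProductSpace ℝ (E i)]

theorem hasFDerivAt_pi_norm_sq (y : Π i, E i) :
    HasFDerivAt (fun w : Π i, E i => fun i => ‖w i‖ ^ 2)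
      (ContinuousLinearMap.pi fun i =>
        (2 : ℝ) • (innerSL ℝ (y i)).comp (ContinuousLinearMap.proj i)) y := by
  refine hasFDerivAt_pi'.mpr fun i => ?_
  refine ((hasFDerivAt_apply (𝕜 := ℝ) i y).norm_sq).congr_fderiv ?_
  ext v
  simp

theorem surjective_fderiv_pi_norm_sq {y : Π i, E i} (hy : ∀ i, y i ≠ 0) :
    Function.Surjective (fderiv ℝ (fun w : Π i, E i => fun i => ‖w i‖ ^ 2) y) := by
  rw [(hasFDerivAt_pi_norm_sq y).fderiv]
  intro c
  refine ⟨fun i => (c i / (2 * ‖y i‖ ^ 2)) • y i, funext fun i => ?_⟩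
  have hnorm : ‖y i‖ ≠ 0 := norm_ne_zero_iff.mpr (hy i)
  simp only [ContinuousLinearMap.pi_apply, smul_apply,
    ContinuousLinearMap.coe_comp, Function.comp_apply, ContinuousLinearMap.proj_apply,
    innerSL_apply_apply, smul_eq_mul, real_inner_smul_right, real_inner_self_eq_norm_sq]
  field_simp

end PiNormSq

theorem circle_construction_no_singular_over_open_region_general (l l' : ℕ)
    (mlab : Fin l → Fin l') (I : Fin l' → ℕ)
    (p : Fin l → EuclideanSpace ℝ (Fin 2)) (r : Fin l → ℝ)
    (x : EuclideanSpace ℝ (Fin 2)) (y : Π j' : Fin l', EuclideanSpace ℝ (Fin (I j' + 1)))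
    (hM : ∀ j' : Fin l',
      ∏ j ∈ Finset.univ.filter (fun j => mlab j = j'),
        (r j ^ 2 - ‖x - p j‖ ^ 2) = ‖y j'‖ ^ 2)
    (hpos : ∀ j : Fin l, 0 < r j ^ 2 - ‖x - p j‖ ^ 2) :
    (∀ j' : Fin l', y j' ≠ 0) ∧
      Function.Surjective
        (fderiv ℝ
          (fun w : Π j' : Fin l', EuclideanSpace ℝ (Fin (I j' + 1)) =>
            (fun j' : Fin l' => ‖w j'‖ ^ 2 : Fin l' → ℝ)) y) := by
  have hy : ∀ j', y j' ≠ 0 := fun j' => by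
    have hsq : 0 < ‖y j'‖ ^ 2 := hM j' ▸ Finset.prod_pos fun j _ => hpos j
    exact norm_ne_zero_iff.mp (sq_pos_iff.mp hsq)
  exact ⟨hy, surjective_fderiv_pi_norm_sq hy⟩

/-- Over the open region `D = {x : f_j(x) > 0 for all j}`, the fibers of the circle
construction avoid the origins: if `(x, y) ∈ M` and `f_j(x) > 0` for every `j`, then
each `y_{j'} ≠ 0` and the derivative at `y` of `y ↦ (‖y_{j'}‖²)_{j'}` is surjective
onto `ℝ^{l'}`, so the projection of `M` to `ℝ²` has no singular points over `D`. -/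
theorem circle_construction_no_singular_over_open_region (l l' : ℕ) (hl : 0 < l)
    (hl' : 0 < l') (mlab : Fin l → Fin l') (I : Fin l' → ℕ)
    (p : Fin l → EuclideanSpace ℝ (Fin 2)) (r : Fin l → ℝ) (hr : ∀ j, 0 < r j)
    (x : EuclideanSpace ℝ (Fin 2)) (y : Π j' : Fin l', EuclideanSpace ℝ (Fin (I j' + 1)))
    (hM : ∀ j' : Fin l',
      ∏ j ∈ Finset.univ.filter (fun j => mlab j = j'),
        (r j ^ 2 - ‖x - p j‖ ^ 2) = ‖y j'‖ ^ 2)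
    (hpos : ∀ j : Fin l, 0 < r j ^ 2 - ‖x - p j‖ ^ 2) :
    (∀ j' : Fin l', y j' ≠ 0) ∧
      Function.Surjective
        (fderiv ℝ
          (fun w : Π j' : Fin l', EuclideanSpace ℝ (Fin (I j' + 1)) =>
            (fun j' : Fin l' => ‖w j'‖ ^ 2 : Fin l' → ℝ)) y) :=
  circle_construction_no_singular_over_open_region_general l l' mlab I p r x y hM hpos
end
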